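/- arXiv:2403.18500 — 6 statements merged into one kernel-verified Lean document; each statement's English description precedes it below -/
import Mathlib

section
/- Let N ≥ 1 be an integer, K₀ > 1 and α > 0 real numbers, and let (d_i)_{0≤i≤N}, (a_i)_{0≤i≤N} be sequences of nonnegative reals satisfying the recursive inequalities of the context. Then for every integer i with 1 ≤ i ≤ N one has d_i ≤ (4K₀)^i · (α + d₀ + log(e + 2K₀³·a₀)). -/
/-- Under the recursive inequalities
`d_{i+1} ≤ α + K₀·d_i + (1/(2K₀))·log(e + 2K₀³·a_{i+1})` and
`a_{i+1} ≤ a_i·exp(K₀·d_{i+1})` for `0 ≤ i ≤ N−1`, one has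
`d_i ≤ (4K₀)^i · (α + d₀ + log(e + 2K₀³·a₀))` for all `1 ≤ i ≤ N`. -/
theorem stmt_0 (N : ℕ) (hN : 1 ≤ N) (K₀ α : ℝ) (hK : 1 < K₀) (hα : 0 < α)
    (d a : ℕ → ℝ) (hd : ∀ i ≤ N, 0 ≤ d i) (ha : ∀ i ≤ N, 0 ≤ a i)
    (hrec1 : ∀ i, i < N →
      d (i + 1) ≤ α + K₀ * d i +
        1 / (2 * K₀) * Real.log (Real.exp 1 + 2 * K₀ ^ 3 * a (i + 1)))
    (hrec2 : ∀ i, i < N → a (i + 1) ≤ a i * Real.exp (K₀ * d (i + 1))) :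
    ∀ i, 1 ≤ i → i ≤ N →
      d i ≤ (4 * K₀) ^ i *
        (α + d 0 + Real.log (Real.exp 1 + 2 * K₀ ^ 3 * a 0)) := by
  have hK0 : (0:ℝ) < K₀ := by linarith
  set L : ℕ → ℝ := fun i => Real.log (Real.exp 1 + 2 * K₀ ^ 3 * a i) with hLdef
  have hK3 : (0:ℝ) < K₀ ^ 3 := pow_pos hK0 3
  have hLpos : ∀ i ≤ N, 1 ≤ L i := by
    intro i hi
    have h1 : Real.exp 1 ≤ Real.exp 1 + 2 * K₀ ^ 3 * a i := by
      nlinarith [ha i hi]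
    calc (1:ℝ) = Real.log (Real.exp 1) := (Real.log_exp 1).symm
      _ ≤ L i := Real.log_le_log (Real.exp_pos 1) h1
  -- Step 1 : L (i+1) ≤ L i + K₀ * d (i+1)
  have hstep1 : ∀ i, i < N → L (i + 1) ≤ L i + K₀ * d (i + 1) := by
    intro i hi
    have hdnn : 0 ≤ d (i + 1) := hd _ (by omega)
    have hexp1 : (1:ℝ) ≤ Real.exp (K₀ * d (i + 1)) :=
      Real.one_le_exp (by positivity)
    have hpos : (0:ℝ) < Real.exp 1 + 2 * K₀ ^ 3 * a i := by
      nlinarith [ha i (by omega : i ≤ N), Real.exp_pos 1]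
    have h1 : Real.exp 1 + 2 * K₀ ^ 3 * a (i + 1) ≤
        (Real.exp 1 + 2 * K₀ ^ 3 * a i) * Real.exp (K₀ * d (i + 1)) := by
      nlinarith [hrec2 i hi, ha i (by omega : i ≤ N), Real.exp_pos 1]
    have h2 : L (i + 1) ≤
        Real.log ((Real.exp 1 + 2 * K₀ ^ 3 * a i) * Real.exp (K₀ * d (i + 1))) := by
      apply Real.log_le_log _ h1
      nlinarith [ha (i+1) (by omega : i + 1 ≤ N), Real.exp_pos 1]
    rw [Real.log_mul (ne_of_gt hpos) (ne_of_gt (Real.exp_pos _)), Real.log_exp] at h2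
    exact h2
  -- Step 2 : d (i+1) ≤ 2α + 2K₀ d i + L i / K₀
  have hstep2 : ∀ i, i < N → d (i + 1) ≤ 2 * α + 2 * K₀ * d i + L i / K₀ := by
    intro i hi
    have h1 := hrec1 i hi
    have h2 := hstep1 i hi
    have h3 : d (i + 1) ≤ α + K₀ * d i + 1 / (2 * K₀) * (L i + K₀ * d (i + 1)) := by
      calc d (i + 1) ≤ α + K₀ * d i + 1 / (2 * K₀) * L (i + 1) := h1
        _ ≤ _ := by
          have : (0:ℝ) < 1 / (2 * K₀) := by positivity
          nlinarith
    have he : 1 / (2 * K₀) * (L i + K₀ * d (i + 1)) = L i / (2 * K₀) + d (i + 1) / 2 := by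
      field_simp
    rw [he] at h3
    have he2 : L i / K₀ = 2 * (L i / (2 * K₀)) := by field_simp
    rw [he2]; linarith
  -- the key auxiliary quantity
  set w : ℕ → ℝ := fun i => d i + L i / K₀ + 2 * α with hwdef
  have hLK : ∀ i ≤ N, L i / K₀ ≤ L i := by
    intro i hi
    rw [div_le_iff₀ hK0]
    nlinarith [hLpos i hi]
  have hLKnn : ∀ i ≤ N, 0 ≤ L i / K₀ := by
    intro i hi
    have := hLpos i hi
    positivity
  have hd2 : ∀ i, i < N → d (i + 1) ≤ 2 * K₀ * w i := by
    intro i hi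
    have h1 := hstep2 i hi
    have h2 := hLK i (by omega)
    have h3 := hLKnn i (by omega)
    have h4 := hd i (by omega)
    have h5 := hLpos i (by omega)
    simp only [hwdef]
    nlinarith
  have hwstep : ∀ i, i < N → w (i + 1) ≤ 4 * K₀ * w i := by
    intro i hi
    have h1 := hstep2 i hi
    have h2 := hstep1 i hi
    have h3 := hLK i (by omega)
    have h4 := hd i (by omega)
    have h5 := hLpos i (by omega)
    have h6 := hLpos (i+1) (by omega)
    simp only [hwdef]
    have hL1 : L (i + 1) / K₀ ≤ L i / K₀ + d (i + 1) := by
      rw [div_le_iff₀ hK0]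
      have : (L i / K₀) * K₀ = L i := by field_simp
      nlinarith [hd _ (by omega : i + 1 ≤ N)]
    nlinarith [hd _ (by omega : i + 1 ≤ N), hLKnn i (by omega : i ≤ N)]
  have hwnn : ∀ i ≤ N, 0 ≤ w i := by
    intro i hi
    have := hd i hi
    have := hLKnn i hi
    simp only [hwdef]
    linarith
  have hwpow : ∀ i ≤ N, w i ≤ (4 * K₀) ^ i * w 0 := by
    intro i
    induction i with
    | zero => intro _; simp
    | succ j ih =>
      intro hj
      have h1 := hwstep j (by omega)
      have h2 := ih (by omega)
      have h3 : 4 * K₀ * w j ≤ 4 * K₀ * ((4 * K₀) ^ j * w 0) := by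
        apply mul_le_mul_of_nonneg_left h2 (by positivity)
      calc w (j + 1) ≤ 4 * K₀ * w j := h1
        _ ≤ 4 * K₀ * ((4 * K₀) ^ j * w 0) := h3
        _ = (4 * K₀) ^ (j + 1) * w 0 := by ring
  -- w 0 ≤ 2 * M
  have hw0 : w 0 ≤ 2 * (α + d 0 + L 0) := by
    have h1 := hLK 0 (by omega)
    have h2 := hd 0 (by omega)
    have h3 := hLpos 0 (by omega)
    simp only [hwdef]
    linarith
  intro i hi1 hiN
  obtain ⟨j, rfl⟩ : ∃ j, i = j + 1 := ⟨i - 1, by omega⟩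
  have h1 := hd2 j (by omega)
  have h2 := hwpow j (by omega)
  have h3 : (0:ℝ) ≤ (4 * K₀) ^ j := by positivity
  have h4 : 2 * K₀ * w j ≤ 2 * K₀ * ((4 * K₀) ^ j * w 0) :=
    mul_le_mul_of_nonneg_left h2 (by positivity)
  have h5 : (4 * K₀) ^ j * w 0 ≤ (4 * K₀) ^ j * (2 * (α + d 0 + L 0)) :=
    mul_le_mul_of_nonneg_left hw0 h3
  calc d (j + 1) ≤ 2 * K₀ * w j := h1
    _ ≤ 2 * K₀ * ((4 * K₀) ^ j * w 0) := h4
    _ ≤ 2 * K₀ * ((4 * K₀) ^ j * (2 * (α + d 0 + L 0))) := by nlinarith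
    _ = (4 * K₀) ^ (j + 1) * (α + d 0 + L 0) := by ring
end

section
/- Let N ≥ 1 be an integer, K₀ > 1 and α > 0 real numbers, and let (d_i)_{0≤i≤N}, (a_i)_{0≤i≤N} be sequences of nonnegative reals satisfying the recursive inequalities of the context. Then for every integer i with 1 ≤ i ≤ N one has a_i ≤ ((e + 2K₀³·a₀) · exp(K₀·d₀) · exp(K₀·α))^{(4K₀)^i}. -/
/-- Under the recursive inequalities
`d_{i+1} ≤ α + K₀·d_i + (1/(2K₀))·log(e + 2K₀³·a_{i+1})` and
`a_{i+1} ≤ a_i·exp(K₀·d_{i+1})` for `0 ≤ i ≤ N−1`, one has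
`a_i ≤ ((e + 2K₀³·a₀)·exp(K₀·d₀)·exp(K₀·α))^{(4K₀)^i}` for all `1 ≤ i ≤ N`. -/
theorem stmt_1 (N : ℕ) (hN : 1 ≤ N) (K₀ α : ℝ) (hK : 1 < K₀) (hα : 0 < α)
    (d a : ℕ → ℝ) (hd : ∀ i ≤ N, 0 ≤ d i) (ha : ∀ i ≤ N, 0 ≤ a i)
    (hrec1 : ∀ i, i < N →
      d (i + 1) ≤ α + K₀ * d i +
        1 / (2 * K₀) * Real.log (Real.exp 1 + 2 * K₀ ^ 3 * a (i + 1)))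
    (hrec2 : ∀ i, i < N → a (i + 1) ≤ a i * Real.exp (K₀ * d (i + 1))) :
    ∀ i, 1 ≤ i → i ≤ N →
      a i ≤ ((Real.exp 1 + 2 * K₀ ^ 3 * a 0) * Real.exp (K₀ * d 0) *
        Real.exp (K₀ * α)) ^ ((4 * K₀) ^ i : ℝ) := by
  have hK0 : (0:ℝ) < K₀ := lt_trans one_pos hK
  -- abbreviations
  set u : ℕ → ℝ := fun i => Real.log (Real.exp 1 + 2 * K₀ ^ 3 * a i) with hu_def
  set f : ℕ → ℝ := fun i => 2 * u i + 2 * K₀ * (K₀ * d i) + 3 * (K₀ * α) with hf_def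
  have hxpos : ∀ i, i ≤ N → 0 < Real.exp 1 + 2 * K₀ ^ 3 * a i := by
    intro i hi
    have h1 := ha i hi
    have h2 : (0:ℝ) < Real.exp 1 := Real.exp_pos 1
    nlinarith [pow_pos hK0 3]
  have hxone : ∀ i, i ≤ N → 1 ≤ Real.exp 1 + 2 * K₀ ^ 3 * a i := by
    intro i hi
    have h1 := ha i hi
    have h2 : (1:ℝ) ≤ Real.exp 1 := by
      have := Real.add_one_le_exp (1:ℝ); linarith
    nlinarith [pow_pos hK0 3]
  have hu0 : ∀ i, i ≤ N → 0 ≤ u i := fun i hi => Real.log_nonneg (hxone i hi)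
  -- Lemma A : u (i+1) ≤ u i + K₀ * d (i+1)
  have hA : ∀ i, i < N → u (i + 1) ≤ u i + K₀ * d (i + 1) := by
    intro i hi
    have hd1 : 0 ≤ d (i + 1) := hd (i + 1) (by omega)
    have hexp1 : 1 ≤ Real.exp (K₀ * d (i + 1)) := Real.one_le_exp (by positivity)
    have h2 := hrec2 i hi
    have hai : 0 ≤ a i := ha i (by omega)
    have h3 : 2 * K₀ ^ 3 * a (i + 1) ≤ 2 * K₀ ^ 3 * (a i * Real.exp (K₀ * d (i + 1))) := by
      apply mul_le_mul_of_nonneg_left h2 (by positivity)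
    have hle : Real.exp 1 + 2 * K₀ ^ 3 * a (i + 1) ≤
        (Real.exp 1 + 2 * K₀ ^ 3 * a i) * Real.exp (K₀ * d (i + 1)) := by
      have he : (0:ℝ) < Real.exp 1 := Real.exp_pos 1
      nlinarith [h3, he, hexp1]
    have := Real.log_le_log (hxpos (i + 1) (by omega)) hle
    calc u (i + 1) ≤ Real.log ((Real.exp 1 + 2 * K₀ ^ 3 * a i) * Real.exp (K₀ * d (i + 1))) :=
          this
      _ = u i + K₀ * d (i + 1) := by
          rw [Real.log_mul (ne_of_gt (hxpos i (by omega))) (Real.exp_ne_zero _), Real.log_exp]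
  -- Lemma B : K₀ * d (i+1) ≤ 2*K₀*α + 2*K₀^2*(d i) + u i
  have hB : ∀ i, i < N → K₀ * d (i + 1) ≤ 2 * K₀ * α + 2 * K₀ ^ 2 * d i + u i := by
    intro i hi
    have h1 := hrec1 i hi
    have h2 := hA i hi
    have h4 : 2 * K₀ * d (i + 1) ≤
        2 * K₀ * α + 2 * K₀ * (K₀ * d i) + u (i + 1) := by
      have := mul_le_mul_of_nonneg_left h1 (by positivity : (0:ℝ) ≤ 2 * K₀)
      have hne : (2 * K₀) ≠ 0 := by positivity
      have heq : 2 * K₀ * (1 / (2 * K₀) * u (i + 1)) = u (i + 1) := by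
        field_simp
      nlinarith [this, heq]
    linarith [h4, h2]
  -- step for f
  have hC : ∀ i, i + 1 ≤ N → f (i + 1) ≤ 4 * K₀ * f i := by
    intro i hi
    have hiN : i < N := by omega
    have h2 := hA i hiN
    have h3 := hB i hiN
    have hmul : (2 + 2 * K₀) * (K₀ * d (i + 1)) ≤
        (2 + 2 * K₀) * (2 * K₀ * α + 2 * K₀ ^ 2 * d i + u i) :=
      mul_le_mul_of_nonneg_left h3 (by positivity)
    have hu' := hu0 i (by omega)
    have hdi := hd i (by omega)
    simp only [hf_def]
    nlinarith [hmul, h2, mul_nonneg (by nlinarith : (0:ℝ) ≤ 6 * K₀ - 4) hu',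
      mul_nonneg (by nlinarith : (0:ℝ) ≤ 4 * K₀ ^ 3 - 4 * K₀ ^ 2) hdi,
      mul_nonneg (by nlinarith : (0:ℝ) ≤ 8 * K₀ ^ 2 - 7 * K₀) hα.le]
  -- induction
  have hind : ∀ i, i ≤ N → f i ≤ (4 * K₀) ^ i * f 0 := by
    intro i
    induction i with
    | zero => intro _; simp
    | succ n ih =>
      intro hn
      have h1 : f (n + 1) ≤ 4 * K₀ * f n := hC n hn
      have h2 : 4 * K₀ * f n ≤ 4 * K₀ * ((4 * K₀) ^ n * f 0) :=
        mul_le_mul_of_nonneg_left (ih (by omega)) (by positivity)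
      calc f (n + 1) ≤ 4 * K₀ * ((4 * K₀) ^ n * f 0) := le_trans h1 h2
        _ = (4 * K₀) ^ (n + 1) * f 0 := by ring
  -- log of M
  have hMpos : (0:ℝ) < (Real.exp 1 + 2 * K₀ ^ 3 * a 0) * Real.exp (K₀ * d 0) *
      Real.exp (K₀ * α) :=
    mul_pos (mul_pos (hxpos 0 (Nat.zero_le N)) (Real.exp_pos _)) (Real.exp_pos _)
  have hlogM : Real.log ((Real.exp 1 + 2 * K₀ ^ 3 * a 0) * Real.exp (K₀ * d 0) *
      Real.exp (K₀ * α)) = u 0 + K₀ * d 0 + K₀ * α := by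
    rw [Real.log_mul (ne_of_gt (mul_pos (hxpos 0 (Nat.zero_le N)) (Real.exp_pos _))) (Real.exp_ne_zero _),
      Real.log_mul (ne_of_gt (hxpos 0 (Nat.zero_le N))) (Real.exp_ne_zero _),
      Real.log_exp, Real.log_exp]
  have hf0 : f 0 ≤ 4 * K₀ * (u 0 + K₀ * d 0 + K₀ * α) := by
    have hu' := hu0 0 (Nat.zero_le N)
    have hd0 := hd 0 (Nat.zero_le N)
    simp only [hf_def]
    nlinarith [mul_nonneg (by nlinarith : (0:ℝ) ≤ 4 * K₀ - 2) hu',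
      mul_nonneg (by nlinarith : (0:ℝ) ≤ 2 * K₀ ^ 2) hd0,
      mul_nonneg (by nlinarith : (0:ℝ) ≤ 4 * K₀ ^ 2 - 3 * K₀) hα.le]
  -- conclusion
  intro i hi1 hiN
  obtain ⟨j, rfl⟩ : ∃ j, i = j + 1 := ⟨i - 1, by omega⟩
  have hjN : j < N := by omega
  have hstep : u (j + 1) ≤ f j := by
    have h2 := hA j hjN
    have h3 := hB j hjN
    simp only [hf_def]
    nlinarith [mul_nonneg hK0.le hα.le]
  have hchain : u (j + 1) ≤ (4 * K₀) ^ (j + 1) * (u 0 + K₀ * d 0 + K₀ * α) := by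
    have h1 : f j ≤ (4 * K₀) ^ j * f 0 := hind j (by omega)
    have h2 : (4 * K₀) ^ j * f 0 ≤ (4 * K₀) ^ j * (4 * K₀ * (u 0 + K₀ * d 0 + K₀ * α)) :=
      mul_le_mul_of_nonneg_left hf0 (by positivity)
    calc u (j + 1) ≤ f j := hstep
      _ ≤ (4 * K₀) ^ j * (4 * K₀ * (u 0 + K₀ * d 0 + K₀ * α)) := le_trans h1 h2
      _ = (4 * K₀) ^ (j + 1) * (u 0 + K₀ * d 0 + K₀ * α) := by ring
  rw [Real.rpow_def_of_pos hMpos, hlogM]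
  have haj : a (j + 1) ≤ Real.exp 1 + 2 * K₀ ^ 3 * a (j + 1) := by
    have h1 := ha (j + 1) hiN
    have h2 : (0:ℝ) < Real.exp 1 := Real.exp_pos 1
    nlinarith [pow_pos hK0 3, one_lt_pow₀ hK (by norm_num : 3 ≠ 0)]
  calc a (j + 1) ≤ Real.exp 1 + 2 * K₀ ^ 3 * a (j + 1) := haj
    _ = Real.exp (u (j + 1)) := (Real.exp_log (hxpos (j + 1) hiN)).symm
    _ ≤ Real.exp ((u 0 + K₀ * d 0 + K₀ * α) * (4 * K₀) ^ (j + 1)) := by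
        apply Real.exp_le_exp.2
        calc u (j + 1) ≤ (4 * K₀) ^ (j + 1) * (u 0 + K₀ * d 0 + K₀ * α) := hchain
          _ = (u 0 + K₀ * d 0 + K₀ * α) * (4 * K₀) ^ (j + 1) := by ring
end

section
/- Let N ≥ 1 be an integer, K₀ > 1 and α > 0 real numbers, and let (d_i)_{0≤i≤N}, (a_i)_{0≤i≤N} be sequences of nonnegative reals satisfying the recursive inequalities of the context. Then for every integer i with 0 ≤ i ≤ N−1 one has e + 2K₀³·a_{i+1} ≤ exp(2K₀·α) · exp(2K₀²·d_i) · (e + 2K₀³·a_i)². -/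
/-- Under the recursive inequalities
`d_{i+1} ≤ α + K₀·d_i + (1/(2K₀))·log(e + 2K₀³·a_{i+1})` and
`a_{i+1} ≤ a_i·exp(K₀·d_{i+1})` for `0 ≤ i ≤ N−1`, one has
`e + 2K₀³·a_{i+1} ≤ exp(2K₀·α)·exp(2K₀²·d_i)·(e + 2K₀³·a_i)²`
for all `0 ≤ i ≤ N−1`. -/
theorem stmt_3 (N : ℕ) (hN : 1 ≤ N) (K₀ α : ℝ) (hK : 1 < K₀) (hα : 0 < α)
    (d a : ℕ → ℝ) (hd : ∀ i ≤ N, 0 ≤ d i) (ha : ∀ i ≤ N, 0 ≤ a i)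
    (hrec1 : ∀ i, i < N →
      d (i + 1) ≤ α + K₀ * d i +
        1 / (2 * K₀) * Real.log (Real.exp 1 + 2 * K₀ ^ 3 * a (i + 1)))
    (hrec2 : ∀ i, i < N → a (i + 1) ≤ a i * Real.exp (K₀ * d (i + 1))) :
    ∀ i, i < N →
      Real.exp 1 + 2 * K₀ ^ 3 * a (i + 1) ≤
        Real.exp (2 * K₀ * α) * Real.exp (2 * K₀ ^ 2 * d i) *
          (Real.exp 1 + 2 * K₀ ^ 3 * a i) ^ 2 := by
  intro i hi
  have hK0 : (0:ℝ) < K₀ := by linarith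
  have hK3 : (0:ℝ) < K₀ ^ 3 := pow_pos hK0 3
  have hai : 0 ≤ a i := ha i (by omega)
  have hai1 : 0 ≤ a (i + 1) := ha (i + 1) (by omega)
  have hdi : 0 ≤ d i := hd i (by omega)
  set B1 : ℝ := Real.exp 1 + 2 * K₀ ^ 3 * a (i + 1) with hB1def
  set B0 : ℝ := Real.exp 1 + 2 * K₀ ^ 3 * a i with hB0def
  have hB1e : Real.exp 1 ≤ B1 := by nlinarith
  have hB0e : Real.exp 1 ≤ B0 := by nlinarith
  have hB1pos : 0 < B1 := lt_of_lt_of_le (Real.exp_pos 1) hB1e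
  have hB0pos : 0 < B0 := lt_of_lt_of_le (Real.exp_pos 1) hB0e
  set L : ℝ := Real.log B1 with hLdef
  have hL1 : 1 ≤ L := (Real.le_log_iff_exp_le hB1pos).mpr hB1e
  have hexpL : Real.exp L = B1 := Real.exp_log hB1pos
  have h1 : K₀ * d (i + 1) ≤ K₀ * α + K₀ ^ 2 * d i + L / 2 := by
    have h := mul_le_mul_of_nonneg_left (hrec1 i hi) hK0.le
    have h2 : K₀ * (α + K₀ * d i + 1 / (2 * K₀) * L)
        = K₀ * α + K₀ ^ 2 * d i + L / 2 := by
      field_simp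
    linarith [h, h2.le]
  set C : ℝ := Real.exp (K₀ * α + K₀ ^ 2 * d i) with hCdef
  have hC1 : 1 ≤ C := Real.one_le_exp (by nlinarith)
  have hE1 : 1 ≤ Real.exp (L / 2) := Real.one_le_exp (by linarith)
  have h2 : a (i + 1) ≤ a i * (C * Real.exp (L / 2)) := by
    have := le_trans (hrec2 i hi)
      (mul_le_mul_of_nonneg_left (Real.exp_le_exp.mpr h1) hai)
    rwa [show K₀ * α + K₀ ^ 2 * d i + L / 2
        = (K₀ * α + K₀ ^ 2 * d i) + L / 2 from by ring, Real.exp_add] at this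
  have key : B1 ≤ C * Real.exp (L / 2) * B0 := by
    have hCE : 1 ≤ C * Real.exp (L / 2) := one_le_mul_of_one_le_of_one_le hC1 hE1
    rw [hB1def, hB0def]
    nlinarith [Real.exp_pos 1]
  have hsq : Real.exp (L / 2) ^ 2 = B1 := by
    rw [← Real.exp_nat_mul]
    norm_num
    rw [show (2:ℝ) * (L / 2) = L from by ring, hexpL]
  have hdiv : Real.exp (L / 2) ≤ C * B0 := by
    have hEpos : 0 < Real.exp (L / 2) := Real.exp_pos _
    nlinarith [key, hsq]
  have hfin : B1 ≤ (C * B0) ^ 2 := by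
    calc B1 = Real.exp (L / 2) ^ 2 := hsq.symm
      _ ≤ (C * B0) ^ 2 := by
          apply pow_le_pow_left₀ (Real.exp_pos _).le hdiv
  have hCsq : C ^ 2 = Real.exp (2 * K₀ * α) * Real.exp (2 * K₀ ^ 2 * d i) := by
    rw [hCdef, ← Real.exp_add, ← Real.exp_nat_mul]
    norm_num
    ring_nf
  calc B1 ≤ (C * B0) ^ 2 := hfin
    _ = C ^ 2 * B0 ^ 2 := by ring
    _ = Real.exp (2 * K₀ * α) * Real.exp (2 * K₀ ^ 2 * d i) * B0 ^ 2 := by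
        rw [hCsq]
end

section
/- Let (X, μ) be a measure space with 0 < μ(X) < ∞, let 1 ≤ q < p < ∞ and 1 ≤ r < ∞, and let f : X → [0,∞) be measurable with M_p := ‖f‖_{L^{p,∞}} < ∞ and M_q := ‖f‖_{L^{q,∞}} > 0. Then ∫₀^∞ λ^{r−1} · d_f(λ)^{r/q} dλ ≤ (p/(p−q)) · M_q^r · ( 1/r + log( μ(X)^{1/q − 1/p} · M_p / M_q ) ). -/
/-!
Split `(0, ∞)` at cuts `a ≤ b` and bound `d_f(λ)` by `μ(X)` on `(0, a]`, by `(M_q/λ)^q` on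
`(a, b]` and by `(M_p/λ)^p` on `(b, ∞)`. For `a = M_q μ(X)^{-1/q}` and
`b = (M_p^p / M_q^q)^{1/(p-q)}` the three pieces integrate to `M_q^r / r`, `M_q^r log (b/a)` and
`M_q^r q / (r (p - q))`, which add up to the right-hand side. That `a ≤ b` is the comparison
`M_q ≤ μ(X)^{1/q - 1/p} M_p` of weak norms on a finite measure space, which also shows that
`M_q` is finite and that `M_p` and `μ(X)` are positive.
-/

open MeasureTheory Set

/-- The weak Lorentz quasinorm `‖f‖_{L^{s,∞}} = sup_{λ>0} λ·μ({f > λ})^{1/s}`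
(valued in `ENNReal`). -/
noncomputable def weakLorentzNorm {X : Type*} [MeasurableSpace X]
    (μ : Measure X) (f : X → ℝ) (s : ℝ) : ENNReal :=
  ⨆ l ∈ Set.Ioi (0 : ℝ), ENNReal.ofReal l * (μ {x | l < f x}) ^ (1 / s)

open ENNReal Real

lemma lintegral_Ioc_zero_rpow_sub_one {a r : ℝ} (ha : 0 ≤ a) (hr : 0 < r) :
    ∫⁻ l in Ioc 0 a, ENNReal.ofReal (l ^ (r - 1)) = ENNReal.ofReal (a ^ r / r) := by
  have hint : IntegrableOn (fun l : ℝ ↦ l ^ (r - 1)) (Ioc 0 a) :=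
    (intervalIntegral.intervalIntegrable_rpow' (by linarith)).1
  rw [← ofReal_integral_eq_lintegral_ofReal hint, ← intervalIntegral.integral_of_le ha,
    integral_rpow (Or.inl (by linarith)), sub_add_cancel, zero_rpow hr.ne', sub_zero]
  filter_upwards [ae_restrict_mem measurableSet_Ioc] with l hl
  exact rpow_nonneg hl.1.le _

lemma lintegral_Ioc_inv {a b : ℝ} (ha : 0 < a) (hab : a ≤ b) :
    ∫⁻ l in Ioc a b, ENNReal.ofReal l⁻¹ = ENNReal.ofReal (log (b / a)) := by
  have hint : IntegrableOn (fun l : ℝ ↦ l⁻¹) (Ioc a b) :=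
    (intervalIntegral.intervalIntegrable_inv
      (fun l hl ↦ ((lt_min ha (ha.trans_le hab)).trans_le hl.1).ne')
      continuousOn_id).1
  rw [← ofReal_integral_eq_lintegral_ofReal hint, ← intervalIntegral.integral_of_le hab,
    integral_inv_of_pos ha (ha.trans_le hab)]
  filter_upwards [ae_restrict_mem measurableSet_Ioc] with l hl
  exact inv_nonneg.2 (ha.trans hl.1).le

lemma lintegral_Ioi_rpow {b c : ℝ} (hb : 0 < b) (hc : c < -1) :
    ∫⁻ l in Ioi b, ENNReal.ofReal (l ^ c) = ENNReal.ofReal (-b ^ (c + 1) / (c + 1)) := by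
  rw [← ofReal_integral_eq_lintegral_ofReal (integrableOn_Ioi_rpow_of_lt hc hb),
    integral_Ioi_rpow_of_lt hc hb]
  filter_upwards [ae_restrict_mem measurableSet_Ioi] with l hl
  exact rpow_nonneg (hb.trans hl).le _

lemma ofReal_rpow_mul_rpow_le {y : ℝ≥0∞} {l C r s t : ℝ} (hl : 0 < l) (hC : 0 ≤ C)
    (ht : 0 ≤ t) (hy : y ≤ ENNReal.ofReal (C * l ^ (-s))) :
    ENNReal.ofReal (l ^ (r - 1)) * y ^ t ≤ ENNReal.ofReal (C ^ t * l ^ (r - 1 - s * t)) :=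
  calc ENNReal.ofReal (l ^ (r - 1)) * y ^ t
      ≤ ENNReal.ofReal (l ^ (r - 1)) * ENNReal.ofReal (C * l ^ (-s)) ^ t := by gcongr
    _ = ENNReal.ofReal (l ^ (r - 1) * (C * l ^ (-s)) ^ t) := by
      rw [ofReal_rpow_of_nonneg (by positivity) ht, ofReal_mul (by positivity)]
    _ = ENNReal.ofReal (C ^ t * l ^ (r - 1 - s * t)) := by
      congr 1
      rw [mul_rpow hC (by positivity), ← rpow_mul hl.le, neg_mul, rpow_neg hl.le,
        rpow_sub hl (r - 1)]
      ring

lemma setLIntegral_rpow_mul_rpow_le {g : ℝ → ℝ≥0∞} {S : Set ℝ} {C r s t : ℝ}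
    (hS : MeasurableSet S) (hS0 : S ⊆ Ioi 0) (hC : 0 ≤ C) (ht : 0 ≤ t)
    (hg : ∀ l ∈ S, g l ≤ ENNReal.ofReal (C * l ^ (-s))) :
    ∫⁻ l in S, ENNReal.ofReal (l ^ (r - 1)) * g l ^ t ≤
      ENNReal.ofReal (C ^ t) * ∫⁻ l in S, ENNReal.ofReal (l ^ (r - 1 - s * t)) := by
  rw [← lintegral_const_mul' _ _ ofReal_ne_top]
  refine setLIntegral_mono' hS fun l hl ↦ ?_
  rw [← ofReal_mul (by positivity)]
  exact ofReal_rpow_mul_rpow_le (hS0 hl) hC ht (hg l hl)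

lemma setLIntegral_Ioc_zero_rpow_mul_rpow_le {g : ℝ → ℝ≥0∞} {a C r t : ℝ} (ha : 0 ≤ a)
    (hC : 0 ≤ C) (hr : 0 < r) (ht : 0 ≤ t) (hg : ∀ l ∈ Ioc 0 a, g l ≤ ENNReal.ofReal C) :
    ∫⁻ l in Ioc 0 a, ENNReal.ofReal (l ^ (r - 1)) * g l ^ t ≤
      ENNReal.ofReal (C ^ t * (a ^ r / r)) :=
  calc ∫⁻ l in Ioc 0 a, ENNReal.ofReal (l ^ (r - 1)) * g l ^ t
      ≤ ENNReal.ofReal (C ^ t) * ∫⁻ l in Ioc 0 a, ENNReal.ofReal (l ^ (r - 1 - 0 * t)) :=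
        setLIntegral_rpow_mul_rpow_le measurableSet_Ioc Ioc_subset_Ioi_self hC ht
          fun l hl ↦ by simpa using hg l hl
    _ = ENNReal.ofReal (C ^ t * (a ^ r / r)) := by
      rw [zero_mul, sub_zero, lintegral_Ioc_zero_rpow_sub_one ha hr,
        ofReal_mul (by positivity)]

lemma setLIntegral_Ioc_rpow_mul_rpow_le {g : ℝ → ℝ≥0∞} {a b M q r : ℝ} (ha : 0 < a)
    (hab : a ≤ b) (hM : 0 ≤ M) (hq : 0 < q) (hr : 0 ≤ r)
    (hg : ∀ l ∈ Ioc a b, g l ≤ ENNReal.ofReal (M ^ q * l ^ (-q))) :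
    ∫⁻ l in Ioc a b, ENNReal.ofReal (l ^ (r - 1)) * g l ^ (r / q) ≤
      ENNReal.ofReal (M ^ r * log (b / a)) :=
  calc ∫⁻ l in Ioc a b, ENNReal.ofReal (l ^ (r - 1)) * g l ^ (r / q)
      ≤ ENNReal.ofReal ((M ^ q) ^ (r / q)) *
          ∫⁻ l in Ioc a b, ENNReal.ofReal (l ^ (r - 1 - q * (r / q))) :=
        setLIntegral_rpow_mul_rpow_le measurableSet_Ioc
          (Ioc_subset_Ioi_self.trans (Ioi_subset_Ioi ha.le)) (by positivity) (by positivity) hg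
    _ = ENNReal.ofReal (M ^ r * log (b / a)) := by
      simp_rw [← rpow_mul hM, mul_div_cancel₀ r hq.ne', sub_sub_cancel_left, Real.rpow_neg_one]
      rw [lintegral_Ioc_inv ha hab, ofReal_mul (by positivity)]

lemma setLIntegral_Ioi_rpow_mul_rpow_le {g : ℝ → ℝ≥0∞} {b M p q r : ℝ} (hb : 0 < b)
    (hM : 0 ≤ M) (hq : 0 < q) (hqp : q < p) (hr : 0 < r)
    (hg : ∀ l ∈ Ioi b, g l ≤ ENNReal.ofReal (M ^ p * l ^ (-p))) :
    ∫⁻ l in Ioi b, ENNReal.ofReal (l ^ (r - 1)) * g l ^ (r / q) ≤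
      ENNReal.ofReal (M ^ (p * (r / q)) * b ^ (r - p * (r / q)) * (q / (r * (p - q)))) :=
  calc ∫⁻ l in Ioi b, ENNReal.ofReal (l ^ (r - 1)) * g l ^ (r / q)
      ≤ ENNReal.ofReal ((M ^ p) ^ (r / q)) *
          ∫⁻ l in Ioi b, ENNReal.ofReal (l ^ (r - 1 - p * (r / q))) :=
        setLIntegral_rpow_mul_rpow_le measurableSet_Ioi (Ioi_subset_Ioi hb.le)
          (by positivity) (by positivity) hg
    _ = _ := by
      have hexp : r - 1 - p * (r / q) + 1 = r - p * (r / q) := by ring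
      have hc : r - p * (r / q) = -(r * (p - q) / q) := by field_simp; ring
      have hk : 0 < r * (p - q) / q := div_pos (mul_pos hr (sub_pos.2 hqp)) hq
      rw [lintegral_Ioi_rpow hb (by linarith), hexp, ← ofReal_mul (by positivity),
        ← rpow_mul hM, mul_assoc]
      generalize b ^ (r - p * (r / q)) = B
      rw [hc, neg_div_neg_eq, div_div_eq_mul_div, mul_div_assoc]

lemma setLIntegral_Ioi_eq_add_add {F : ℝ → ℝ≥0∞} {a b c : ℝ} (hab : a ≤ b) (hbc : b ≤ c) :
    ∫⁻ l in Ioi a, F l =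
      (∫⁻ l in Ioc a b, F l) + (∫⁻ l in Ioc b c, F l) + ∫⁻ l in Ioi c, F l := by
  rw [← Ioc_union_Ioi_eq_Ioi (hab.trans hbc),
    lintegral_union measurableSet_Ioi (Ioc_disjoint_Ioi le_rfl), ← Ioc_union_Ioc_eq_Ioc hab hbc,
    lintegral_union measurableSet_Ioc (Ioc_disjoint_Ioc_of_le le_rfl)]

lemma exp_three_region_bound_eq {p q r : ℝ} (hq : 0 < q) (hqp : q < p) (hr : 0 < r)
    (u v w : ℝ) :
    exp w ^ (r / q) * (exp (v - w / q) ^ r / r) +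
        exp v ^ r * log (exp ((p * u - q * v) / (p - q)) / exp (v - w / q)) +
        exp u ^ (p * (r / q)) * exp ((p * u - q * v) / (p - q)) ^ (r - p * (r / q)) *
          (q / (r * (p - q))) =
      p / (p - q) * exp v ^ r * (1 / r + log (exp w ^ (1 / q - 1 / p) * exp u / exp v)) := by
  have hpq := (sub_pos.2 hqp).ne'
  have hp := (hq.trans hqp).ne'
  rw [show exp w ^ (r / q) * (exp (v - w / q) ^ r / r) = exp (v * r) / r by
      rw [← exp_mul, ← exp_mul, mul_div_assoc', ← exp_add]
      congr 2
      field_simp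
      ring,
    show exp u ^ (p * (r / q)) * exp ((p * u - q * v) / (p - q)) ^ (r - p * (r / q)) =
        exp (v * r) by
      rw [← exp_mul, ← exp_mul, ← exp_add]
      congr 1
      field_simp
      ring,
    ← exp_sub, ← exp_mul, ← exp_mul, ← exp_add, ← exp_sub, log_exp, log_exp]
  field_simp
  ring

section ThreeRegions

variable {g : ℝ → ℝ≥0∞} {p q r A Mq Mp : ℝ}

lemma setLIntegral_Ioi_zero_rpow_mul_rpow_le_of_cuts {a b : ℝ} (ha : 0 < a) (hab : a ≤ b)
    (hA : 0 ≤ A) (hMq : 0 ≤ Mq) (hMp : 0 ≤ Mp) (hq : 0 < q) (hqp : q < p) (hr : 0 < r)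
    (hgA : ∀ l > 0, g l ≤ ENNReal.ofReal A)
    (hgq : ∀ l > 0, g l ≤ ENNReal.ofReal (Mq ^ q * l ^ (-q)))
    (hgp : ∀ l > 0, g l ≤ ENNReal.ofReal (Mp ^ p * l ^ (-p))) :
    ∫⁻ l in Ioi 0, ENNReal.ofReal (l ^ (r - 1)) * g l ^ (r / q) ≤
      ENNReal.ofReal (A ^ (r / q) * (a ^ r / r) + Mq ^ r * log (b / a) +
        Mp ^ (p * (r / q)) * b ^ (r - p * (r / q)) * (q / (r * (p - q)))) := by
  have hb := ha.trans_le hab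
  have hpq := sub_pos.2 hqp
  have hlog : 0 ≤ log (b / a) := log_nonneg ((one_le_div ha).2 hab)
  rw [setLIntegral_Ioi_eq_add_add ha.le hab, ofReal_add (by positivity) (by positivity),
    ofReal_add (by positivity) (by positivity)]
  gcongr ?_ + ?_ + ?_
  · exact setLIntegral_Ioc_zero_rpow_mul_rpow_le ha.le hA hr (by positivity)
      fun l hl ↦ hgA l hl.1
  · exact setLIntegral_Ioc_rpow_mul_rpow_le ha hab hMq hq hr.le fun l hl ↦ hgq l (ha.trans hl.1)
  · exact setLIntegral_Ioi_rpow_mul_rpow_le hb hMp hq hqp hr fun l hl ↦ hgp l (hb.trans hl)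

lemma setLIntegral_Ioi_zero_rpow_mul_rpow_le (hA : 0 ≤ A) (hMq : 0 < Mq) (hq : 0 < q)
    (hqp : q < p) (hr : 0 < r) (hgA : ∀ l > 0, g l ≤ ENNReal.ofReal A)
    (hgq : ∀ l > 0, g l ≤ ENNReal.ofReal (Mq ^ q * l ^ (-q)))
    (hgp : ∀ l > 0, g l ≤ ENNReal.ofReal (Mp ^ p * l ^ (-p)))
    (hMqp : Mq ≤ A ^ (1 / q - 1 / p) * Mp) :
    ∫⁻ l in Ioi 0, ENNReal.ofReal (l ^ (r - 1)) * g l ^ (r / q) ≤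
      ENNReal.ofReal (p / (p - q) * Mq ^ r * (1 / r + log (A ^ (1 / q - 1 / p) * Mp / Mq))) := by
  have hp := hq.trans hqp
  have hpq := sub_pos.2 hqp
  have he : 0 < 1 / q - 1 / p := sub_pos.2 (one_div_lt_one_div_of_lt hq hqp)
  have hA : 0 < A := hA.lt_of_ne fun h ↦ by
    rw [← h, zero_rpow he.ne', zero_mul] at hMqp
    linarith
  have hMp : 0 < Mp := pos_of_mul_pos_right (hMq.trans_le hMqp) (by positivity)
  obtain ⟨w, rfl⟩ : ∃ w, A = exp w := ⟨log A, (exp_log hA).symm⟩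
  obtain ⟨v, rfl⟩ : ∃ v, Mq = exp v := ⟨log Mq, (exp_log hMq).symm⟩
  obtain ⟨u, rfl⟩ : ∃ u, Mp = exp u := ⟨log Mp, (exp_log hMp).symm⟩
  have hvu : v ≤ w * (1 / q - 1 / p) + u := by
    rwa [← exp_mul, ← exp_add, exp_le_exp] at hMqp
  have hcut : v - w / q ≤ (p * u - q * v) / (p - q) := by
    rw [le_div_iff₀ hpq]
    have : (v - w / q) * (p - q) = p * (v - w * (1 / q - 1 / p)) - q * v := by
      field_simp
      ring
    nlinarith
  -- The cuts are where `A` meets `(Mq/λ)^q` and where `(Mq/λ)^q` meets `(Mp/λ)^p`.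
  refine (setLIntegral_Ioi_zero_rpow_mul_rpow_le_of_cuts (exp_pos _) (exp_le_exp.2 hcut)
    hA.le hMq.le hMp.le hq hqp hr hgA hgq hgp).trans_eq
    (congrArg ENNReal.ofReal (exp_three_region_bound_eq hq hqp hr u v w))

end ThreeRegions

section WeakLorentz

variable {X : Type*} [MeasurableSpace X] {μ : Measure X} {f : X → ℝ} {p q s : ℝ}

lemma ofReal_mul_measure_rpow_le_weakLorentzNorm {l : ℝ} (hl : 0 < l) :
    ENNReal.ofReal l * μ {x | l < f x} ^ (1 / s) ≤ weakLorentzNorm μ f s :=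
  le_iSup₂ (f := fun l (_ : l ∈ Ioi (0 : ℝ)) ↦
    ENNReal.ofReal l * μ {x | l < f x} ^ (1 / s)) l hl

lemma measure_lt_le_weakLorentzNorm_rpow_mul {l : ℝ} (hs : 0 < s)
    (hM : weakLorentzNorm μ f s ≠ ⊤) (hl : 0 < l) :
    μ {x | l < f x} ≤ ENNReal.ofReal ((weakLorentzNorm μ f s).toReal ^ s * l ^ (-s)) := by
  have hroot :
      μ {x | l < f x} ^ (1 / s) ≤ ENNReal.ofReal ((weakLorentzNorm μ f s).toReal / l) := by
    rw [ENNReal.ofReal_div_of_pos hl, ofReal_toReal hM,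
      ENNReal.le_div_iff_mul_le (Or.inl (by simpa using hl)) (Or.inl ofReal_ne_top), mul_comm]
    exact ofReal_mul_measure_rpow_le_weakLorentzNorm hl
  have := ENNReal.rpow_le_rpow hroot hs.le
  rwa [← ENNReal.rpow_mul, one_div_mul_cancel hs.ne', ENNReal.rpow_one,
    ENNReal.ofReal_rpow_of_nonneg (by positivity) hs.le, div_rpow toReal_nonneg hl.le,
    div_eq_mul_inv, ← Real.rpow_neg hl.le] at this

lemma weakLorentzNorm_le_measure_univ_rpow_mul (hq : 0 < q) (hqp : q ≤ p) :
    weakLorentzNorm μ f q ≤ μ univ ^ (1 / q - 1 / p) * weakLorentzNorm μ f p := by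
  have he : 0 ≤ 1 / q - 1 / p := sub_nonneg.2 (one_div_le_one_div_of_le hq hqp)
  refine iSup₂_le fun l hl ↦ ?_
  calc ENNReal.ofReal l * μ {x | l < f x} ^ (1 / q)
      = ENNReal.ofReal l * μ {x | l < f x} ^ (1 / p) * μ {x | l < f x} ^ (1 / q - 1 / p) := by
        rw [mul_assoc, ← ENNReal.rpow_add_of_nonneg _ _ (by positivity [hq.trans_le hqp]) he,
          add_sub_cancel]
    _ ≤ weakLorentzNorm μ f p * μ univ ^ (1 / q - 1 / p) := by
        gcongr
        · exact ofReal_mul_measure_rpow_le_weakLorentzNorm hl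
        · exact subset_univ _
    _ = μ univ ^ (1 / q - 1 / p) * weakLorentzNorm μ f p := mul_comm _ _

end WeakLorentz

theorem stmt_4_general {X : Type*} [MeasurableSpace X] (μ : Measure X)
    (f : X → ℝ)
    (p q r : ℝ) (hq : 1 ≤ q) (hqp : q < p) (hr : 1 ≤ r)
    (hμ : μ Set.univ ≠ ⊤)
    (hMp : weakLorentzNorm μ f p ≠ ⊤) (hMq : weakLorentzNorm μ f q ≠ 0) :
    ∫⁻ l in Set.Ioi (0 : ℝ),
        ENNReal.ofReal (l ^ (r - 1)) * (μ {x | l < f x}) ^ (r / q) ≤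
      ENNReal.ofReal (p / (p - q) * (weakLorentzNorm μ f q).toReal ^ r *
        (1 / r + Real.log ((μ Set.univ).toReal ^ (1 / q - 1 / p) *
          (weakLorentzNorm μ f p).toReal / (weakLorentzNorm μ f q).toReal))) := by
  have hq0 : 0 < q := by linarith
  have he : 0 ≤ 1 / q - 1 / p := sub_nonneg.2 (one_div_le_one_div_of_le hq0 hqp.le)
  have hMqp := weakLorentzNorm_le_measure_univ_rpow_mul (μ := μ) (f := f) hq0 hqp.le
  have hMq_top : weakLorentzNorm μ f q ≠ ⊤ :=
    ne_top_of_le_ne_top (mul_ne_top (rpow_ne_top_of_nonneg he hμ) hMp) hMqp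
  refine setLIntegral_Ioi_zero_rpow_mul_rpow_le toReal_nonneg (toReal_pos hMq hMq_top) hq0 hqp
    (by linarith) (fun l _ ↦ ?_)
    (fun l hl ↦ measure_lt_le_weakLorentzNorm_rpow_mul hq0 hMq_top hl)
    (fun l hl ↦ measure_lt_le_weakLorentzNorm_rpow_mul (hq0.trans hqp) hMp hl) ?_
  · exact (measure_mono (subset_univ _)).trans (ofReal_toReal hμ).ge
  · rw [toReal_rpow, ← toReal_mul]
    exact toReal_mono (mul_ne_top (rpow_ne_top_of_nonneg he hμ) hMp) hMqp

/-- on a finite measure space with `0 < μ(X) < ∞`, for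
`1 ≤ q < p < ∞`, `1 ≤ r < ∞` and a measurable nonnegative `f` with
`M_p := ‖f‖_{L^{p,∞}} < ∞` and `M_q := ‖f‖_{L^{q,∞}} > 0`, one has
`∫₀^∞ λ^{r−1}·d_f(λ)^{r/q} dλ
  ≤ (p/(p−q))·M_q^r·(1/r + log(μ(X)^{1/q−1/p}·M_p/M_q))`. -/
theorem stmt_4 {X : Type*} [MeasurableSpace X] (μ : Measure X)
    (f : X → ℝ) (hf : Measurable f) (hf0 : ∀ x, 0 ≤ f x)
    (p q r : ℝ) (hq : 1 ≤ q) (hqp : q < p) (hr : 1 ≤ r)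
    (hμ0 : μ Set.univ ≠ 0) (hμ : μ Set.univ ≠ ⊤)
    (hMp : weakLorentzNorm μ f p ≠ ⊤) (hMq : weakLorentzNorm μ f q ≠ 0) :
    ∫⁻ l in Set.Ioi (0 : ℝ),
        ENNReal.ofReal (l ^ (r - 1)) * (μ {x | l < f x}) ^ (r / q) ≤
      ENNReal.ofReal (p / (p - q) * (weakLorentzNorm μ f q).toReal ^ r *
        (1 / r + Real.log ((μ Set.univ).toReal ^ (1 / q - 1 / p) *
          (weakLorentzNorm μ f p).toReal / (weakLorentzNorm μ f q).toReal))) :=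
  stmt_4_general μ f p q r hq hqp hr hμ hMp hMq
end

section
/- Let (X, μ) be a measure space with 0 < μ(X) < ∞, let q ∈ (1,∞), and let f : X → [0,∞) be measurable and essentially bounded with 0 < ‖f‖_{L^∞} < ∞. Then, writing M_q := ‖f‖_{L^{q,∞}} (which is positive), one has ( ∫₀^∞ λ · d_f(λ)^{2/q} dλ )^{1/2} ≤ M_q · ( 1 + ( log( ‖f‖_{L^∞} · μ(X)^{1/q} / M_q ) )^{1/2} ). -/
/-!
Write `d(λ) = μ{f > λ}`, `M = ‖f‖_{L^{q,∞}}`, `B = ‖f‖_{L^∞}` and `V = μ(X)^{1/q}`. Then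
`d(λ)^{1/q} ≤ V`, `λ·d(λ)^{1/q} ≤ M`, and `d` vanishes beyond `B`; in particular `M ≤ B·V`.
Using the first bound on `(0, M/V]` and the second on `(M/V, B]`, the integrand `λ·d(λ)^{2/q}` is
at most `V²λ`, resp. `M²/λ`, so the integral is at most `M²/2 + M²·log(BV/M)`, and
`√(M²/2 + M²L) ≤ M(1 + √L)`.
-/

open MeasureTheory Set

lemma ofReal_mul_sq_le_ofReal {g : ENNReal} {l b : ℝ} (hl : 0 ≤ l)
    (hg : g ≤ ENNReal.ofReal b) :
    ENNReal.ofReal l * g ^ 2 ≤ ENNReal.ofReal (l * b ^ 2) := by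
  rcases le_or_gt b 0 with hb | hb
  · rw [ENNReal.ofReal_of_nonpos hb, nonpos_iff_eq_zero] at hg
    simp [hg]
  · rw [ENNReal.ofReal_mul hl, ENNReal.ofReal_pow hb.le]
    gcongr

lemma setLIntegral_Ioc_zero_le_of_le_const_mul {φ : ℝ → ENNReal} {c T : ℝ} (hc : 0 ≤ c)
    (hT : 0 ≤ T) (hφ : ∀ l ∈ Ioc 0 T, φ l ≤ ENNReal.ofReal (c * l)) :
    ∫⁻ l in Ioc 0 T, φ l ≤ ENNReal.ofReal (c * T ^ 2 / 2) := by
  have hint : IntegrableOn (fun l : ℝ => c * l) (Ioc 0 T) :=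
    Continuous.integrableOn_Ioc (by fun_prop)
  have hnonneg : ∀ᵐ l ∂(volume.restrict (Ioc 0 T)), 0 ≤ c * l :=
    (ae_restrict_iff' measurableSet_Ioc).2 (.of_forall fun l hl => mul_nonneg hc hl.1.le)
  calc ∫⁻ l in Ioc 0 T, φ l
      ≤ ∫⁻ l in Ioc 0 T, ENNReal.ofReal (c * l) :=
        setLIntegral_mono (measurable_const.mul measurable_id).ennreal_ofReal hφ
    _ = ENNReal.ofReal (∫ l in Ioc 0 T, c * l) :=
        (ofReal_integral_eq_lintegral_ofReal hint hnonneg).symm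
    _ = ENNReal.ofReal (c * T ^ 2 / 2) := by
        rw [← intervalIntegral.integral_of_le hT, intervalIntegral.integral_const_mul,
          integral_id]
        ring_nf

lemma setLIntegral_Ioc_le_of_le_const_div {φ : ℝ → ENNReal} {c a b : ℝ} (hc : 0 ≤ c)
    (ha : 0 < a) (hab : a ≤ b) (hφ : ∀ l ∈ Ioc a b, φ l ≤ ENNReal.ofReal (c / l)) :
    ∫⁻ l in Ioc a b, φ l ≤ ENNReal.ofReal (c * Real.log (b / a)) := by
  have hint : IntegrableOn (fun l => c / l) (Ioc a b) :=
    ((continuousOn_const.div continuousOn_id fun l hl =>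
      (ha.trans_le hl.1).ne').integrableOn_Icc).mono_set Ioc_subset_Icc_self
  have hnonneg : ∀ᵐ l ∂(volume.restrict (Ioc a b)), 0 ≤ c / l :=
    (ae_restrict_iff' measurableSet_Ioc).2
      (.of_forall fun l hl => div_nonneg hc (ha.trans hl.1).le)
  have hzero : (0 : ℝ) ∉ uIcc a b := by
    rw [uIcc_of_le hab]
    exact fun h => h.1.not_gt ha
  calc ∫⁻ l in Ioc a b, φ l
      ≤ ∫⁻ l in Ioc a b, ENNReal.ofReal (c / l) :=
        setLIntegral_mono (measurable_const.div measurable_id).ennreal_ofReal hφ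
    _ = ENNReal.ofReal (∫ l in Ioc a b, c / l) :=
        (ofReal_integral_eq_lintegral_ofReal hint hnonneg).symm
    _ = ENNReal.ofReal (c * Real.log (b / a)) := by
        simp_rw [← intervalIntegral.integral_of_le hab, div_eq_mul_one_div c,
          intervalIntegral.integral_const_mul, integral_one_div hzero]

lemma lintegral_Ioi_ofReal_mul_sq_le (g : ℝ → ENNReal) {m V B : ℝ} (hm : 0 < m) (hV : 0 < V)
    (hmB : m ≤ B * V) (hgV : ∀ l > 0, g l ≤ ENNReal.ofReal V)
    (hgm : ∀ l > 0, ENNReal.ofReal l * g l ≤ ENNReal.ofReal m)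
    (hgB : ∀ l, B < l → g l = 0) :
    ∫⁻ l in Ioi 0, ENNReal.ofReal l * g l ^ 2 ≤
      ENNReal.ofReal (m ^ 2 / 2 + m ^ 2 * Real.log (B * V / m)) := by
  set T := m / V
  have hT : 0 < T := div_pos hm hV
  have hTB : T ≤ B := (div_le_iff₀ hV).2 hmB
  have hlow : ∀ l ∈ Ioc 0 T, ENNReal.ofReal l * g l ^ 2 ≤ ENNReal.ofReal (V ^ 2 * l) :=
    fun l hl => mul_comm l (V ^ 2) ▸ ofReal_mul_sq_le_ofReal hl.1.le (hgV l hl.1)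
  have hmid : ∀ l ∈ Ioc T B, ENNReal.ofReal l * g l ^ 2 ≤ ENNReal.ofReal (m ^ 2 / l) := by
    intro l hl
    have hl0 : 0 < l := hT.trans hl.1
    have hg : g l ≤ ENNReal.ofReal (m / l) := by
      rw [ENNReal.ofReal_div_of_pos hl0, ENNReal.le_div_iff_mul_le (by simp [hl0]) (by simp),
        mul_comm]
      exact hgm l hl0
    convert ofReal_mul_sq_le_ofReal hl0.le hg using 2
    field_simp
  have hhigh : ∫⁻ l in Ioi B, ENNReal.ofReal l * g l ^ 2 = 0 :=
    setLIntegral_eq_zero measurableSet_Ioi fun l hl => by simp [hgB l hl]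
  have hsplit : ∫⁻ l in Ioi 0, ENNReal.ofReal l * g l ^ 2 =
      (∫⁻ l in Ioc 0 T, ENNReal.ofReal l * g l ^ 2) +
        ∫⁻ l in Ioc T B, ENNReal.ofReal l * g l ^ 2 := by
    rw [← Ioc_union_Ioi_eq_Ioi (hT.le.trans hTB),
      lintegral_union measurableSet_Ioi (Ioc_disjoint_Ioi le_rfl), hhigh, add_zero,
      ← Ioc_union_Ioc_eq_Ioc hT.le hTB,
      lintegral_union measurableSet_Ioc (Ioc_disjoint_Ioc_of_le le_rfl)]
  have hlog : 0 ≤ Real.log (B / T) := Real.log_nonneg ((one_le_div hT).2 hTB)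
  calc ∫⁻ l in Ioi 0, ENNReal.ofReal l * g l ^ 2
      ≤ ENNReal.ofReal (V ^ 2 * T ^ 2 / 2) + ENNReal.ofReal (m ^ 2 * Real.log (B / T)) :=
        hsplit ▸ add_le_add (setLIntegral_Ioc_zero_le_of_le_const_mul (sq_nonneg V) hT.le hlow)
          (setLIntegral_Ioc_le_of_le_const_div (sq_nonneg m) hT hTB hmid)
    _ = ENNReal.ofReal (m ^ 2 / 2 + m ^ 2 * Real.log (B * V / m)) := by
        rw [← ENNReal.ofReal_add (by positivity) (mul_nonneg (sq_nonneg m) hlog),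
          div_div_eq_mul_div]
        congr 2
        simp only [T]
        field_simp

lemma ofReal_sq_div_two_add_sq_mul_rpow_half_le {m L : ℝ} (hm : 0 ≤ m) (hL : 0 ≤ L) :
    ENNReal.ofReal (m ^ 2 / 2 + m ^ 2 * L) ^ (1 / 2 : ℝ) ≤ ENNReal.ofReal (m * (1 + √L)) := by
  rw [ENNReal.ofReal_rpow_of_nonneg (by positivity) (by norm_num), ← Real.sqrt_eq_rpow]
  refine ENNReal.ofReal_le_ofReal (Real.sqrt_le_iff.2 ⟨by positivity, ?_⟩)
  nlinarith [Real.sq_sqrt hL, Real.sqrt_nonneg L, mul_nonneg (sq_nonneg m) (Real.sqrt_nonneg L)]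

open Filter

section WeakLorentz

variable {X : Type*} [MeasurableSpace X] {μ : Measure X} {f : X → ℝ}

lemma ofReal_mul_rpow_le_weakLorentzNorm {l : ℝ} (hl : 0 < l) (s : ℝ) :
    ENNReal.ofReal l * μ {x | l < f x} ^ (1 / s) ≤ weakLorentzNorm μ f s :=
  le_biSup (fun l => ENNReal.ofReal l * μ {x | l < f x} ^ (1 / s)) hl

lemma measure_lt_eq_zero_of_essSup_le (hf : IsBoundedUnder (· ≤ ·) (ae μ) f) {l : ℝ}
    (hl : essSup f μ ≤ l) : μ {x | l < f x} = 0 :=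
  measure_mono_null (fun _ hx => hl.trans_lt hx) (meas_essSup_lt hf)

lemma weakLorentzNorm_le_ofReal_essSup_mul (hf : IsBoundedUnder (· ≤ ·) (ae μ) f) {s : ℝ}
    (hs : 0 < s) : weakLorentzNorm μ f s ≤ ENNReal.ofReal (essSup f μ) * μ univ ^ (1 / s) := by
  refine iSup₂_le fun l hl => ?_
  rcases le_or_gt (essSup f μ) l with h | h
  · simp [measure_lt_eq_zero_of_essSup_le hf h, hs]
  · gcongr
    exact subset_univ _

lemma weakLorentzNorm_ne_zero [NeZero μ] (hf : 0 ≤ f) {s : ℝ} (hs : 0 < s)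
    (hess : 0 < essSup f μ) : weakLorentzNorm μ f s ≠ 0 := by
  have hd : μ {x | essSup f μ / 2 < f x} ≠ 0 :=
    frequently_ae_iff.1 <| frequently_lt_of_lt_limsup
      (isCoboundedUnder_le_of_le _ hf) (half_lt_self hess)
  refine (lt_of_lt_of_le ?_ (ofReal_mul_rpow_le_weakLorentzNorm (half_pos hess) s)).ne'
  exact ENNReal.mul_pos (by simpa using half_pos hess)
    (ENNReal.rpow_pos_of_nonneg (pos_iff_ne_zero.2 hd) (by positivity)).ne'

end WeakLorentz

theorem stmt_5_general {X : Type*} [MeasurableSpace X] (μ : Measure X)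
    (f : X → ℝ) (hf0 : ∀ x, 0 ≤ f x)
    (q : ℝ) (hq : 1 < q)
    (hμ0 : μ Set.univ ≠ 0) (hμ : μ Set.univ ≠ ⊤)
    (hbdd : ∃ C : ℝ, ∀ᵐ x ∂μ, f x ≤ C)
    (hess : 0 < essSup f μ) :
    0 < (weakLorentzNorm μ f q).toReal ∧
      (∫⁻ l in Set.Ioi (0 : ℝ),
          ENNReal.ofReal l * (μ {x | l < f x}) ^ (2 / q)) ^ ((1 : ℝ) / 2) ≤
        ENNReal.ofReal ((weakLorentzNorm μ f q).toReal *
          (1 + Real.sqrt (Real.log (essSup f μ * (μ Set.univ).toReal ^ (1 / q) /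
            (weakLorentzNorm μ f q).toReal)))) := by
  have hq0 : 0 < q := one_pos.trans hq
  have hfbdd : IsBoundedUnder (· ≤ ·) (ae μ) f := hbdd
  have : NeZero μ := ⟨fun h => hμ0 (by simp [h])⟩
  set B := essSup f μ
  set V := (μ univ).toReal ^ (1 / q)
  have hV : 0 < V := Real.rpow_pos_of_pos (ENNReal.toReal_pos hμ0 hμ) _
  have hμV : μ univ ^ (1 / q) = ENNReal.ofReal V := by
    rw [← ENNReal.ofReal_rpow_of_nonneg ENNReal.toReal_nonneg (by positivity),
      ENNReal.ofReal_toReal hμ]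
  have hMB : weakLorentzNorm μ f q ≤ ENNReal.ofReal (B * V) := by
    rw [ENNReal.ofReal_mul hess.le, ← hμV]
    exact weakLorentzNorm_le_ofReal_essSup_mul hfbdd hq0
  have hMtop : weakLorentzNorm μ f q ≠ ⊤ := ne_top_of_le_ne_top ENNReal.ofReal_ne_top hMB
  set m := (weakLorentzNorm μ f q).toReal
  have hm : 0 < m := ENNReal.toReal_pos (weakLorentzNorm_ne_zero hf0 hq0 hess) hMtop
  have hmB : m ≤ B * V := ENNReal.toReal_le_of_le_ofReal (by positivity) hMB
  have hsq (d : ENNReal) : d ^ (2 / q) = (d ^ (1 / q)) ^ 2 := by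
    rw [← ENNReal.rpow_natCast, ← ENNReal.rpow_mul]
    congr 1
    ring
  have hint := lintegral_Ioi_ofReal_mul_sq_le (fun l => μ {x | l < f x} ^ (1 / q)) hm hV hmB
    (fun l _ => hμV ▸ ENNReal.rpow_le_rpow (measure_mono (subset_univ _)) (by positivity))
    (fun l hl => ENNReal.ofReal_toReal hMtop ▸ ofReal_mul_rpow_le_weakLorentzNorm hl q)
    (fun l hl => by simp [measure_lt_eq_zero_of_essSup_le hfbdd hl.le, hq0])
  have hL : 0 ≤ Real.log (B * V / m) := Real.log_nonneg ((one_le_div hm).2 hmB)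
  refine ⟨hm, ?_⟩
  simp_rw [hsq]
  exact (ENNReal.rpow_le_rpow hint (by norm_num)).trans
    (ofReal_sq_div_two_add_sq_mul_rpow_half_le hm.le hL)

/-- on a measure space with `0 < μ(X) < ∞`, for `q ∈ (1,∞)` and a
measurable, nonnegative, essentially bounded `f` with `0 < ‖f‖_{L^∞} < ∞`,
writing `M_q := ‖f‖_{L^{q,∞}}` (which is positive), one has
`(∫₀^∞ λ·d_f(λ)^{2/q} dλ)^{1/2} ≤ M_q·(1 + (log(‖f‖_{L^∞}·μ(X)^{1/q}/M_q))^{1/2})`. -/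
theorem stmt_5 {X : Type*} [MeasurableSpace X] (μ : Measure X)
    (f : X → ℝ) (hf : Measurable f) (hf0 : ∀ x, 0 ≤ f x)
    (q : ℝ) (hq : 1 < q)
    (hμ0 : μ Set.univ ≠ 0) (hμ : μ Set.univ ≠ ⊤)
    (hbdd : ∃ C : ℝ, ∀ᵐ x ∂μ, f x ≤ C)
    (hess : 0 < essSup f μ) :
    0 < (weakLorentzNorm μ f q).toReal ∧
      (∫⁻ l in Set.Ioi (0 : ℝ),
          ENNReal.ofReal l * (μ {x | l < f x}) ^ (2 / q)) ^ ((1 : ℝ) / 2) ≤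
        ENNReal.ofReal ((weakLorentzNorm μ f q).toReal *
          (1 + Real.sqrt (Real.log (essSup f μ * (μ Set.univ).toReal ^ (1 / q) /
            (weakLorentzNorm μ f q).toReal)))) :=
  stmt_5_general μ f hf0 q hq hμ0 hμ hbdd hess
end

section
/- Let γ ∈ (0,1) and b ∈ [0,γ) be real numbers (in the paper γ = 1 − 1/α for α ∈ (1,∞) and b = 1/β). Then for every τ > 0 and every real x with 0 < x < τ^γ, one has log(e + 1/x) < log(τ^b + 1) + (γ/(γ − b)) · log(e + τ^b / x). -/
/-- for `γ ∈ (0,1)`, `b ∈ [0,γ)`, every `τ > 0` and every real `x`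
with `0 < x < τ^γ`, one has
`log(e + 1/x) < log(τ^b + 1) + (γ/(γ−b))·log(e + τ^b/x)`. -/
theorem stmt_7 (γ b : ℝ) (hγ0 : 0 < γ) (hγ1 : γ < 1) (hb0 : 0 ≤ b) (hbγ : b < γ)
    (τ : ℝ) (hτ : 0 < τ) (x : ℝ) (hx0 : 0 < x) (hx : x < τ ^ γ) :
    Real.log (Real.exp 1 + 1 / x) <
      Real.log (τ ^ b + 1) + γ / (γ - b) * Real.log (Real.exp 1 + τ ^ b / x) := by
  have hγb : 0 < γ - b := by linarith
  have hτb : (0:ℝ) < τ ^ b := Real.rpow_pos_of_pos hτ b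
  have h1 : 0 < Real.log (τ ^ b + 1) := Real.log_pos (by linarith)
  have he1 : (1:ℝ) ≤ Real.exp 1 := by
    have := Real.add_one_le_exp 1; linarith
  have hL2 : 0 ≤ Real.log (Real.exp 1 + τ ^ b / x) := by
    apply Real.log_nonneg
    have : 0 < τ ^ b / x := div_pos hτb hx0
    linarith
  have key : Real.log (Real.exp 1 + 1 / x) ≤
      γ / (γ - b) * Real.log (Real.exp 1 + τ ^ b / x) := by
    rcases le_or_gt 1 τ with h | h
    · -- τ ≥ 1 : 1/x ≤ τ^b/x and coefficient ≥ 1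
      have h1b : (1:ℝ) ≤ τ ^ b := Real.one_le_rpow h hb0
      have hmono : Real.log (Real.exp 1 + 1 / x) ≤
          Real.log (Real.exp 1 + τ ^ b / x) := by
        apply Real.log_le_log (by positivity)
        gcongr
      have hcoef : (1:ℝ) ≤ γ / (γ - b) := by
        rw [le_div_iff₀ hγb]; linarith
      calc Real.log (Real.exp 1 + 1 / x)
          ≤ Real.log (Real.exp 1 + τ ^ b / x) := hmono
        _ ≤ γ / (γ - b) * Real.log (Real.exp 1 + τ ^ b / x) :=
            le_mul_of_one_le_left hL2 hcoef
    · -- τ < 1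
      have hlogτ : Real.log τ < 0 := Real.log_neg hτ h
      have hτnb : (1:ℝ) ≤ τ ^ (-b) :=
        Real.one_le_rpow_of_pos_of_le_one_of_nonpos hτ h.le (by linarith)
      set L2 := Real.log (Real.exp 1 + τ ^ b / x) with hL2def
      -- Step A : log(e+1/x) ≤ -b*log τ + L2
      have stepA : Real.log (Real.exp 1 + 1 / x) ≤ -b * Real.log τ + L2 := by
        have hmul : τ ^ (-b) * (Real.exp 1 + τ ^ b / x)
            = τ ^ (-b) * Real.exp 1 + 1 / x := by
          have : τ ^ (-b) * τ ^ b = 1 := by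
            rw [← Real.rpow_add hτ]; simp
          field_simp
          ring_nf
          linear_combination this
        have hle : Real.exp 1 + 1 / x ≤ τ ^ (-b) * (Real.exp 1 + τ ^ b / x) := by
          rw [hmul]
          have : Real.exp 1 ≤ τ ^ (-b) * Real.exp 1 :=
            le_mul_of_one_le_left (by positivity) hτnb
          linarith
        have h2 : Real.log (Real.exp 1 + 1 / x)
            ≤ Real.log (τ ^ (-b) * (Real.exp 1 + τ ^ b / x)) := by
          apply Real.log_le_log (by positivity) hle
        rw [Real.log_mul (by positivity) (by positivity), Real.log_rpow hτ] at h2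
        linarith
      -- Step B : (γ - b) * (-log τ) ≤ L2
      have stepB : (γ - b) * (-Real.log τ) ≤ L2 := by
        have hpow : τ ^ (b - γ) < τ ^ b / x := by
          have : τ ^ (b - γ) = τ ^ b / τ ^ γ := by
            rw [Real.rpow_sub hτ]
          rw [this]
          exact div_lt_div_of_pos_left hτb (by positivity) hx
        have h3 : Real.log (τ ^ (b - γ)) ≤ L2 := by
          have : Real.log (τ ^ (b - γ)) ≤ Real.log (Real.exp 1 + τ ^ b / x) := by
            apply Real.log_le_log (by positivity)
            have he0 : (0:ℝ) < Real.exp 1 := Real.exp_pos 1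
            linarith
          exact this
        rw [Real.log_rpow hτ] at h3
        nlinarith
      -- combine
      rw [div_mul_eq_mul_div, le_div_iff₀ hγb]
      have h3 : b * ((γ - b) * (-Real.log τ)) ≤ b * L2 :=
        mul_le_mul_of_nonneg_left stepB hb0
      nlinarith [stepA]
  linarith
end
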